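/- Let A₁ = [[−2, −3], [1, 0]] and A₂ = [[−20, −300], [1, 0]] be real 2×2 matrices (the companion matrices of the Hurwitz polynomials s² + 2s + 3 and s² + 20s + 300). Then there is no symmetric positive definite real 2×2 matrix P such that both A₁ᵀ P + P A₁ and A₂ᵀ P + P A₂ are negative definite; that is, the switched system obtained by switching between ẋ = A₁x and ẋ = A₂x is not quadratically stable. -/

import Mathlib

/-!
Write `P = [[a, b], [b, c]]`. For symmetric `P` the Lyapunov form is
`xᵀ (AᵀP + PA) x = 2 ⟪Px, Ax⟫`, so testing negative definiteness at `(1, 1)` for `A₁` and at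
`(20, -3)`, `(20, -1)` for `A₂` gives the strict linear inequalities
`-5a - 4b + c < 0`, `10000a - 1100b - 60c < 0` and `-2000a + 500b - 20c < 0`.
Their combination with weights `800, 3, 13` reads `360c < 0`, contradicting `c = P₁₁ > 0`.
-/

open Matrix

namespace Matrix.IsSymm

variable {n R : Type*} [Fintype n] [CommRing R] {P : Matrix n n R}

theorem dotProduct_transpose_mul_add_mul_mulVec (hP : P.IsSymm) (A : Matrix n n R)
    (x : n → R) :
    x ⬝ᵥ ((Aᵀ * P + P * A) *ᵥ x) = 2 * (P *ᵥ x ⬝ᵥ A *ᵥ x) := by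
  have hPx : x ᵥ* P = P *ᵥ x := by rw [← mulVec_transpose, hP.eq]
  rw [add_mulVec, dotProduct_add, ← mulVec_mulVec, ← mulVec_mulVec, mulVec_transpose,
    dotProduct_comm x, ← dotProduct_mulVec, dotProduct_mulVec x P, hPx]
  ring

theorem mulVec_dotProduct_companion_mulVec {P : Matrix (Fin 2) (Fin 2) R} (hP : P.IsSymm)
    (p q x y : R) :
    P *ᵥ ![x, y] ⬝ᵥ !![-p, -q; 1, 0] *ᵥ ![x, y] =
      (P 0 0 * x + P 0 1 * y) * (-p * x - q * y) + (P 0 1 * x + P 1 1 * y) * x := by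
  simp only [dotProduct, mulVec, Fin.sum_univ_two, cons_val_zero, cons_val_one, of_apply,
    hP.apply 0 1]
  ring

theorem mulVec_dotProduct_mulVec_neg {P A : Matrix n n ℝ} (hP : P.IsSymm)
    (hA : (-(Aᵀ * P + P * A)).PosDef) {x : n → ℝ} (hx : x ≠ 0) :
    P *ᵥ x ⬝ᵥ A *ᵥ x < 0 := by
  have h := hA.dotProduct_mulVec_pos hx
  rw [star_trivial, neg_mulVec, dotProduct_neg, hP.dotProduct_transpose_mul_add_mul_mulVec] at h
  linarith

end Matrix.IsSymm

/-- The switched system with companion matrices `A₁ = [[−2,−3],[1,0]]` and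
`A₂ = [[−20,−300],[1,0]]` (of the Hurwitz polynomials `s² + 2s + 3` and
`s² + 20s + 300`) is not quadratically stable: no common symmetric positive
definite Lyapunov matrix `P` exists. -/
theorem no_common_lyapunov_example :
    ¬ ∃ P : Matrix (Fin 2) (Fin 2) ℝ, P.IsSymm ∧ P.PosDef ∧
        (-((!![(-2 : ℝ), -3; 1, 0])ᵀ * P + P * !![(-2 : ℝ), -3; 1, 0])).PosDef ∧
        (-((!![(-20 : ℝ), -300; 1, 0])ᵀ * P + P * !![(-20 : ℝ), -300; 1, 0])).PosDef := by
  rintro ⟨P, hsymm, hP, h₁, h₂⟩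
  have hc : 0 < P 1 1 := hP.diag_pos
  have g₁ := hsymm.mulVec_dotProduct_mulVec_neg h₁ (x := ![1, 1]) (by simp)
  have g₂ := hsymm.mulVec_dotProduct_mulVec_neg h₂ (x := ![20, -3]) (by simp)
  have g₃ := hsymm.mulVec_dotProduct_mulVec_neg h₂ (x := ![20, -1]) (by simp)
  rw [hsymm.mulVec_dotProduct_companion_mulVec] at g₁ g₂ g₃
  linarith
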